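/- Let X^ε be a set of s distinct empirical points. If O is an order ideal with #O = s that is stable with respect to X^ε, then for every admissible perturbation X̃ of X^ε the ideal I(X̃) admits an O-border basis, and the coefficient vector α_j ∈ ℝ^s of each border basis polynomial g_j = b_j − Σ_i α_{ij} t_i, viewed as a function of X̃, is continuous on the set of admissible perturbations. -/

import Mathlib

open MvPolynomial Matrix

/-!
With `M(X̃)` the matrix of values of the order ideal's terms at the perturbed points, the
border basis coefficients of `b` solve `M(X̃) α = (b(x̃ᵢ))ᵢ`. Stability makes `M(X̃)` invertible
on all admissible perturbations, so `α = M(X̃)⁻¹ (b(x̃ᵢ))ᵢ`, and this is continuous in `X̃` because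
the entries of `M(X̃)` are polynomial in the points and matrix inversion is continuous at
invertible matrices.
-/

namespace MvPolynomial

variable {σ ι κ K : Type*}

noncomputable def evalMatrix [CommSemiring K] (x : ι → σ → K) (u : κ → MvPolynomial σ K) :
    Matrix ι κ K :=
  Matrix.of fun i j => eval (x i) (u j)

theorem continuous_evalMatrix [CommSemiring K] [TopologicalSpace K] [IsTopologicalSemiring K]
    (u : κ → MvPolynomial σ K) : Continuous fun x : ι → σ → K => evalMatrix x u :=
  continuous_matrix fun i j => (continuous_eval (u j)).comp (continuous_apply i)

section Interpolation

variable [Fintype ι] [DecidableEq ι] [Field K]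

noncomputable def interpolationCoeffs (x : ι → σ → K) (u : ι → MvPolynomial σ K)
    (f : MvPolynomial σ K) : ι → K :=
  (evalMatrix x u)⁻¹ *ᵥ fun i => eval (x i) f

theorem sub_sum_interpolationCoeffs_mem_iInf_ker {x : ι → σ → K} {u : ι → MvPolynomial σ K}
    (hx : IsUnit (evalMatrix x u).det) (f : MvPolynomial σ K) :
    f - ∑ k, C (interpolationCoeffs x u f k) * u k ∈ ⨅ i, RingHom.ker (eval (x i)) := by
  have hsolve : evalMatrix x u *ᵥ interpolationCoeffs x u f = fun i => eval (x i) f := by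
    rw [interpolationCoeffs, mulVec_mulVec, mul_nonsing_inv _ hx, one_mulVec]
  simp only [Submodule.mem_iInf, RingHom.mem_ker]
  intro i
  rw [map_sub, sub_eq_zero, ← congrFun hsolve i]
  simp only [map_sum, map_mul, eval_C, mulVec, dotProduct, evalMatrix, of_apply, mul_comm]

theorem continuousOn_interpolationCoeffs [TopologicalSpace K] [IsTopologicalDivisionRing K]
    (u : ι → MvPolynomial σ K) (f : MvPolynomial σ K) :
    ContinuousOn (fun x => interpolationCoeffs x u f) {x | IsUnit (evalMatrix x u).det} := by
  have hinv : ContinuousOn (fun x : ι → σ → K => (evalMatrix x u)⁻¹)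
      {x | IsUnit (evalMatrix x u).det} := fun x hx => by
    have hdet : ContinuousAt Ring.inverse (evalMatrix x u).det := by
      rw [Ring.inverse_eq_inv']
      exact continuousAt_inv₀ hx.ne_zero
    exact (continuousAt_matrix_inv _ hdet).comp_continuousWithinAt
      (f := fun x : ι → σ → K => evalMatrix x u) (continuous_evalMatrix u).continuousWithinAt
  have hvals : Continuous fun x : ι → σ → K => fun i => eval (x i) f :=
    continuous_pi fun i => (continuous_eval f).comp (continuous_apply i)
  exact (continuous_fst.matrix_mulVec continuous_snd).comp_continuousOn
    (hinv.prodMk hvals.continuousOn)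

end Interpolation

end MvPolynomial

theorem stmt16_general (n s : ℕ)
    (t : Fin s → (Fin n →₀ ℕ))
    (B : Set (Fin n →₀ ℕ))
    (Adm : Set (Fin s → Fin n → ℝ))
    (hstable : ∀ q ∈ Adm, IsUnit (Matrix.of fun i j : Fin s =>
      MvPolynomial.eval (q i) (monomial (t j) (1 : ℝ))).det) :
    ∀ b ∈ B, ∃ α : (Fin s → Fin n → ℝ) → (Fin s → ℝ),
      (∀ q ∈ Adm,
        (monomial b (1 : ℝ) - ∑ k, C (α q k) * monomial (t k) 1)
          ∈ ⨅ i, RingHom.ker (MvPolynomial.eval (q i))) ∧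
      ContinuousOn α Adm := by
  intro b _
  let u : Fin s → MvPolynomial (Fin n) ℝ := fun k => monomial (t k) 1
  refine ⟨fun q => interpolationCoeffs q u (monomial b 1), fun q hq => ?_, ?_⟩
  · exact sub_sum_interpolationCoeffs_mem_iInf_ker (hstable q hq) _
  · exact (continuousOn_interpolationCoeffs u _).mono hstable

/-- If `O = {t 1,...,t s}` (with `#O = s`) is stable w.r.t. the empirical
set `X^ε`, then for every admissible perturbation `q` the ideal `I(X̃)` admits an
`O`-border basis, and the coefficient vector `α b` of each border basis polynomial,
viewed as a function of the perturbed points, is continuous on the set of admissible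
perturbations. -/
theorem stmt16 (n s : ℕ) (p : Fin s → (Fin n → ℝ)) (ε : Fin n → ℝ) (hε : ∀ j, 0 < ε j)
    (t : Fin s → (Fin n →₀ ℕ)) (htinj : Function.Injective t)
    (hO : ∀ k, ∀ t' ≤ t k, ∃ l, t l = t')
    (B : Set (Fin n →₀ ℕ))
    (hB : ∀ b, b ∈ B ↔ ((∀ k, t k ≠ b) ∧ ∃ k, ∃ i : Fin n, b = t k + Finsupp.single i 1))
    (Adm : Set (Fin s → Fin n → ℝ))
    (hAdm : Adm = {q | ∀ k, ∑ j, ((q k j - p k j) / ε j) ^ 2 ≤ 1})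
    (hstable : ∀ q ∈ Adm, IsUnit (Matrix.of fun i j : Fin s =>
      MvPolynomial.eval (q i) (monomial (t j) (1 : ℝ))).det) :
    ∀ b ∈ B, ∃ α : (Fin s → Fin n → ℝ) → (Fin s → ℝ),
      (∀ q ∈ Adm,
        (monomial b (1 : ℝ) - ∑ k, C (α q k) * monomial (t k) 1)
          ∈ ⨅ i, RingHom.ker (MvPolynomial.eval (q i))) ∧
      ContinuousOn α Adm :=
  stmt16_general n s t B Adm hstable
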